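/- arXiv:1706.01478 — 4 statements merged into one kernel-verified Lean document; each statement's English description precedes it below -/
import Mathlib

section
/- Let r ≥ 1 be an integer and let B be a random variable with the Beta(r+1, r+1) distribution, i.e. with density f_B(x) = [(2r+1)!/(r!·r!)]·xʳ(1−x)ʳ on [0,1]. For any real numbers a, b with 0 ≤ a ≤ 1/2 ≤ b ≤ 1 and 1 − (b−a) < 1/2, we have P(B ∉ [a,b]) ≤ 2·(4ʳ/√(πr))·[(1−(b−a))(b−a)]^{r+1}/(2(b−a) − 1). -/
open MeasureTheory Real

/-- `√π ≤ stirlingSeq n` for `n ≥ 1`. -/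
lemma sqrt_pi_le_stirlingSeq {n : ℕ} (hn : 1 ≤ n) : Real.sqrt π ≤ Stirling.stirlingSeq n := by
  obtain ⟨m, rfl⟩ : ∃ m, n = m + 1 := ⟨n - 1, by omega⟩
  have htend : Filter.Tendsto (fun k => Stirling.stirlingSeq (k + 1)) Filter.atTop
      (nhds (Real.sqrt π)) :=
    Stirling.tendsto_stirlingSeq_sqrt_pi.comp (Filter.tendsto_add_atTop_nat 1)
  refine le_of_tendsto htend ?_
  filter_upwards [Filter.eventually_ge_atTop m] with k hk
  exact Stirling.stirlingSeq'_antitone hk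

lemma stirlingSeq_pos' {n : ℕ} (hn : 1 ≤ n) : 0 < Stirling.stirlingSeq n := by
  obtain ⟨m, rfl⟩ : ∃ m, n = m + 1 := ⟨n - 1, by omega⟩
  exact Stirling.stirlingSeq'_pos m

/-- Central binomial coefficient bound `C(2n, n) ≤ 4^n / √(πn)`. -/
lemma centralBinom_le_real {n : ℕ} (hn : 1 ≤ n) :
    (Nat.centralBinom n : ℝ) ≤ 4 ^ n / Real.sqrt (π * n) := by
  have hnR : (0:ℝ) < n := by exact_mod_cast hn
  have hsn : (0:ℝ) < Real.sqrt (π * n) := Real.sqrt_pos.2 (by positivity)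
  have hfact : ∀ m : ℕ, 1 ≤ m →
      (Nat.factorial m : ℝ) = Stirling.stirlingSeq m *
        (Real.sqrt (2 * m) * ((m : ℝ) / Real.exp 1) ^ m) := by
    intro m hm
    have hmR : (0:ℝ) < m := by exact_mod_cast hm
    have hden : (0:ℝ) < Real.sqrt (2 * m) * ((m : ℝ) / Real.exp 1) ^ m := by positivity
    rw [Stirling.stirlingSeq, div_mul_cancel₀]
    exact ne_of_gt hden
  have h2n : (Nat.factorial (2 * n) : ℝ) = Stirling.stirlingSeq (2 * n) *
      (Real.sqrt (2 * (2 * n : ℕ)) * (((2 * n : ℕ) : ℝ) / Real.exp 1) ^ (2 * n)) :=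
    hfact (2 * n) (by omega)
  have hn' : (Nat.factorial n : ℝ) = Stirling.stirlingSeq n *
      (Real.sqrt (2 * n) * ((n : ℝ) / Real.exp 1) ^ n) := hfact n hn
  have hs4 : Real.sqrt (2 * ((2 * n : ℕ) : ℝ)) = 2 * Real.sqrt n := by
    push_cast
    rw [show (2 : ℝ) * (2 * n) = 4 * n by ring, show (4 : ℝ) = 2 ^ 2 by norm_num,
      Real.sqrt_mul (by positivity), Real.sqrt_sq (by norm_num)]
  have hs2 : Real.sqrt (2 * (n : ℝ)) * Real.sqrt (2 * (n : ℝ)) = 2 * n :=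
    Real.mul_self_sqrt (by positivity)
  have hsπ : Real.sqrt (π * n) = Real.sqrt π * Real.sqrt n :=
    Real.sqrt_mul pi_pos.le n
  have hsn' : Real.sqrt (n : ℝ) * Real.sqrt (n : ℝ) = n := Real.mul_self_sqrt hnR.le
  have hcb : (Nat.centralBinom n : ℝ) =
      (Nat.factorial (2 * n) : ℝ) / ((Nat.factorial n : ℝ) * Nat.factorial n) := by
    rw [Nat.centralBinom, Nat.cast_choose ℝ (by omega : n ≤ 2 * n),
      show 2 * n - n = n by omega]
  rw [hcb, div_le_div_iff₀ (by positivity) hsn]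
  have hK : (0:ℝ) < 2 * n * 4 ^ n * ((n : ℝ) / Real.exp 1) ^ (2 * n) := by positivity
  have hL : (Nat.factorial (2 * n) : ℝ) * Real.sqrt (π * n) =
      (Stirling.stirlingSeq (2 * n) * Real.sqrt π) *
        (2 * n * 4 ^ n * ((n : ℝ) / Real.exp 1) ^ (2 * n)) := by
    rw [h2n, hs4, hsπ]
    push_cast
    rw [show (2 * (n:ℝ)) / Real.exp 1 = 2 * ((n:ℝ) / Real.exp 1) by ring, mul_pow,
      show (2:ℝ) ^ (2 * n) = 4 ^ n by rw [pow_mul]; norm_num]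
    linear_combination (2 * 4 ^ n * ((n:ℝ) / Real.exp 1) ^ (2 * n) *
      Stirling.stirlingSeq (2 * n) * Real.sqrt π) * hsn'
  have hR : (4:ℝ) ^ n * ((Nat.factorial n : ℝ) * Nat.factorial n) =
      (Stirling.stirlingSeq n * Stirling.stirlingSeq n) *
        (2 * n * 4 ^ n * ((n : ℝ) / Real.exp 1) ^ (2 * n)) := by
    rw [hn']
    linear_combination (4 ^ n * Stirling.stirlingSeq n * Stirling.stirlingSeq n *
      ((n:ℝ) / Real.exp 1) ^ n * ((n:ℝ) / Real.exp 1) ^ n) * hs2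
  rw [hL, hR]
  apply mul_le_mul_of_nonneg_right _ hK.le
  have h1 : Real.sqrt π ≤ Stirling.stirlingSeq n := sqrt_pi_le_stirlingSeq hn
  have h2 : Stirling.stirlingSeq (2 * n) ≤ Stirling.stirlingSeq n := by
    obtain ⟨m, rfl⟩ : ∃ m, n = m + 1 := ⟨n - 1, by omega⟩
    have := Stirling.stirlingSeq'_antitone (show m ≤ 2 * (m + 1) - 1 by omega)
    simpa [Function.comp, show 2 * (m + 1) - 1 + 1 = 2 * (m + 1) by omega] using this
  have hpos : 0 < Stirling.stirlingSeq (2 * n) := stirlingSeq_pos' (by omega)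
  calc Stirling.stirlingSeq (2 * n) * Real.sqrt π
      ≤ Stirling.stirlingSeq n * Real.sqrt π :=
        mul_le_mul_of_nonneg_right h2 (Real.sqrt_nonneg π)
    _ ≤ Stirling.stirlingSeq n * Stirling.stirlingSeq n :=
        mul_le_mul_of_nonneg_left h1 (hpos.trans_le h2).le


lemma pow_mul_pow_mono (r : ℕ) {u v : ℝ} (hu : 0 ≤ u) (huv : u ≤ v) (hsum : u + v ≤ 1) :
    u ^ r * (1 - u) ^ r ≤ v ^ r * (1 - v) ^ r := by
  rw [← mul_pow, ← mul_pow]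
  exact pow_le_pow_left₀ (by nlinarith) (by nlinarith) r

lemma integral_pow_mul_le (r : ℕ) {m : ℝ} (hm0 : 0 ≤ m) (hm : m < 1/2) :
    ∫ x in (0:ℝ)..m, x ^ r * (1 - x) ^ r ≤
      (m * (1 - m)) ^ (r + 1) / (((r : ℝ) + 1) * (1 - 2 * m)) := by
  have hder : ∀ x ∈ Set.uIcc (0:ℝ) m,
      HasDerivAt (fun x : ℝ => (x * (1 - x)) ^ (r + 1))
        (((r:ℝ) + 1) * (x * (1 - x)) ^ r * (1 - 2 * x)) x := by
    intro x _
    have h1 : HasDerivAt (fun x : ℝ => x * (1 - x)) (1 - 2 * x) x := by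
      have := (hasDerivAt_id x).mul ((hasDerivAt_const x (1:ℝ)).sub (hasDerivAt_id x))
      refine this.congr_deriv ?_
      simp only [id_eq, Pi.sub_apply]
      ring
    have h2 := h1.pow (r + 1)
    refine h2.congr_deriv ?_
    push_cast
    ring_nf
  have hFTC : ∫ x in (0:ℝ)..m, ((r:ℝ) + 1) * (x * (1 - x)) ^ r * (1 - 2 * x)
      = (m * (1 - m)) ^ (r + 1) := by
    rw [intervalIntegral.integral_eq_sub_of_hasDerivAt hder
      ((by continuity : Continuous fun x : ℝ =>
        ((r:ℝ) + 1) * (x * (1 - x)) ^ r * (1 - 2 * x)).intervalIntegrable _ _)]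
    norm_num
  have hmono : ∫ x in (0:ℝ)..m, (((r:ℝ) + 1) * (1 - 2 * m)) * (x ^ r * (1 - x) ^ r)
      ≤ ∫ x in (0:ℝ)..m, ((r:ℝ) + 1) * (x * (1 - x)) ^ r * (1 - 2 * x) := by
    apply intervalIntegral.integral_mono_on hm0
      ((by continuity : Continuous fun x : ℝ =>
        (((r:ℝ) + 1) * (1 - 2 * m)) * (x ^ r * (1 - x) ^ r)).intervalIntegrable _ _)
      ((by continuity : Continuous fun x : ℝ =>
        ((r:ℝ) + 1) * (x * (1 - x)) ^ r * (1 - 2 * x)).intervalIntegrable _ _)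
    intro x hx
    obtain ⟨hx0, hxm⟩ := hx
    have hxx : x ^ r * (1 - x) ^ r = (x * (1 - x)) ^ r := (mul_pow _ _ _).symm
    have hx1 : 0 ≤ 1 - x := by linarith
    have hpos : 0 ≤ (x * (1 - x)) ^ r := pow_nonneg (mul_nonneg hx0 hx1) r
    rw [hxx]
    have h12 : 1 - 2 * m ≤ 1 - 2 * x := by linarith
    have hr1 : (0:ℝ) ≤ (r:ℝ) + 1 := by positivity
    nlinarith [mul_le_mul_of_nonneg_left h12 hpos]
  rw [intervalIntegral.integral_const_mul, hFTC] at hmono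
  have hD : 0 < ((r:ℝ) + 1) * (1 - 2 * m) := by
    have : (0:ℝ) < 1 - 2 * m := by linarith
    positivity
  rw [le_div_iff₀ hD]
  linarith [hmono]

set_option maxHeartbeats 1600000 in
/-- If `B` has the `Beta(r+1, r+1)` distribution, i.e. its law has density
`x ↦ ((2r+1)!/(r!·r!))·xʳ(1-x)ʳ` on `[0,1]` with respect to Lebesgue measure, then for
`0 ≤ a ≤ 1/2 ≤ b ≤ 1` with `1 - (b - a) < 1/2`,
`P(B ∉ [a,b]) ≤ 2·(4ʳ/√(πr))·[(1-(b-a))(b-a)]^(r+1)/(2(b-a) - 1)`. -/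
theorem beta_tail_bound
    {Ω : Type*} [MeasurableSpace Ω] (P : Measure Ω) [IsProbabilityMeasure P]
    (r : ℕ) (hr : 1 ≤ r)
    (B : Ω → ℝ) (hBmeas : Measurable B)
    (hB : Measure.map B P = volume.withDensity fun x =>
      ENNReal.ofReal (if x ∈ Set.Icc (0:ℝ) 1 then
        ((Nat.factorial (2 * r + 1) : ℝ) / ((Nat.factorial r : ℝ) * Nat.factorial r)) *
          x ^ r * (1 - x) ^ r else 0))
    (a b : ℝ) (ha : 0 ≤ a) (hab : a ≤ 1 / 2) (hb2 : 1 / 2 ≤ b) (hb : b ≤ 1)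
    (hgap : 1 - (b - a) < 1 / 2) :
    P {ω | B ω ∉ Set.Icc a b} ≤
      ENNReal.ofReal (2 * (4 ^ r / Real.sqrt (π * r)) *
        ((1 - (b - a)) * (b - a)) ^ (r + 1) / (2 * (b - a) - 1)) := by
  classical
  have hrfac : (0:ℝ) < Nat.factorial r := by exact_mod_cast Nat.factorial_pos r
  have hrfac2 : (0:ℝ) < Nat.factorial (2 * r + 1) := by exact_mod_cast Nat.factorial_pos _
  set c : ℝ := ((Nat.factorial (2 * r + 1) : ℝ) / ((Nat.factorial r : ℝ) * Nat.factorial r))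
    with hc
  have hcpos : 0 < c := by rw [hc]; positivity
  set g : ℝ → ℝ := fun x => x ^ r * (1 - x) ^ r with hg
  have hgc : Continuous g := by
    rw [hg]
    exact (continuous_pow r).mul ((continuous_const.sub continuous_id).pow r)
  have hfc : Continuous fun x : ℝ => c * g x := continuous_const.mul hgc
  -- basic real facts
  set m : ℝ := 1 - (b - a) with hm
  have hs : 1/2 < b - a := by rw [hm] at hgap; linarith
  have hs1 : b - a ≤ 1 := by linarith
  have hm0 : 0 ≤ m := by rw [hm]; linarith
  have hm2 : m < 1/2 := hgap
  have ham : a ≤ m := by rw [hm]; linarith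
  have hbm : 1 - b ≤ m := by rw [hm]; linarith
  have hmab : a + (1 - b) = m := by rw [hm]; ring
  have h1m : 1 - m = b - a := by rw [hm]; ring
  -- nonnegativity of g on relevant ranges
  have hgnn : ∀ x : ℝ, 0 ≤ x → x ≤ 1 → 0 ≤ g x := fun x h0 h1 => by
    rw [hg]
    exact mul_nonneg (pow_nonneg h0 _) (pow_nonneg (by linarith) _)
  -- Step 1: express probability as a lintegral
  have hmap : P {ω | B ω ∉ Set.Icc a b} =
      ∫⁻ x in (Set.Icc a b)ᶜ, ENNReal.ofReal (if x ∈ Set.Icc (0:ℝ) 1 then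
        c * x ^ r * (1 - x) ^ r else 0) := by
    have hpre : {ω | B ω ∉ Set.Icc a b} = B ⁻¹' (Set.Icc a b)ᶜ := rfl
    rw [hpre, ← Measure.map_apply hBmeas measurableSet_Icc.compl, hB,
      withDensity_apply _ measurableSet_Icc.compl]
  -- Step 2: decompose the complement
  have hsubset : (Set.Icc a b)ᶜ = (Set.Ico 0 a ∪ Set.Ioc b 1) ∪ (Set.Iio 0 ∪ Set.Ioi 1) := by
    ext x
    simp only [Set.mem_compl_iff, Set.mem_Icc, Set.mem_union, Set.mem_Ico, Set.mem_Ioc,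
      Set.mem_Iio, Set.mem_Ioi, not_and_or, not_le]
    constructor
    · rintro (h | h)
      · rcases lt_or_ge x 0 with h0 | h0
        · exact Or.inr (Or.inl h0)
        · exact Or.inl (Or.inl ⟨h0, h⟩)
      · rcases le_or_gt x 1 with h1 | h1
        · exact Or.inl (Or.inr ⟨h, h1⟩)
        · exact Or.inr (Or.inr h1)
    · rintro ((⟨_, h⟩ | ⟨h, _⟩) | (h | h))
      · exact Or.inl h
      · exact Or.inr h
      · exact Or.inl (by linarith)
      · exact Or.inr (by linarith)
  -- the density vanishes off [0,1]
  have hzero : ∀ s : Set ℝ, MeasurableSet s → (∀ x ∈ s, x ∉ Set.Icc (0:ℝ) 1) →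
      (∫⁻ x in s, ENNReal.ofReal (if x ∈ Set.Icc (0:ℝ) 1 then
        c * x ^ r * (1 - x) ^ r else 0)) = 0 := by
    intro s hsm hs0
    rw [setLIntegral_congr_fun hsm (fun x hx => ?_), lintegral_zero]
    rw [if_neg (hs0 x hx), ENNReal.ofReal_zero]
  have hzero1 : (∫⁻ x in Set.Iio (0:ℝ), ENNReal.ofReal (if x ∈ Set.Icc (0:ℝ) 1 then
      c * x ^ r * (1 - x) ^ r else 0)) = 0 :=
    hzero _ measurableSet_Iio fun x hx => by
      simp only [Set.mem_Iio] at hx; simp [Set.mem_Icc]; intro h; linarith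
  have hzero2 : (∫⁻ x in Set.Ioi (1:ℝ), ENNReal.ofReal (if x ∈ Set.Icc (0:ℝ) 1 then
      c * x ^ r * (1 - x) ^ r else 0)) = 0 :=
    hzero _ measurableSet_Ioi fun x hx => by
      simp only [Set.mem_Ioi] at hx; simp [Set.mem_Icc]; intro h; linarith
  -- lower tail as interval integral
  have hIco : (∫⁻ x in Set.Ico 0 a, ENNReal.ofReal (if x ∈ Set.Icc (0:ℝ) 1 then
      c * x ^ r * (1 - x) ^ r else 0)) = ENNReal.ofReal (∫ x in (0:ℝ)..a, c * g x) := by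
    rw [setLIntegral_congr_fun measurableSet_Ico (fun x hx => ?_)]
    · rw [← ofReal_integral_eq_lintegral_ofReal]
      · rw [intervalIntegral.integral_of_le ha, ← MeasureTheory.restrict_Ico_eq_restrict_Ioc]
      · exact (hfc.integrableOn_Icc).mono_set Set.Ico_subset_Icc_self
      · filter_upwards [ae_restrict_mem measurableSet_Ico] with x hx
        exact mul_nonneg hcpos.le (hgnn x hx.1 (by linarith [hx.2, hab]))
    · obtain ⟨h0, h1⟩ := hx
      rw [if_pos ⟨h0, by linarith⟩, hg]
      ring
  -- upper tail as interval integral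
  have hIoc : (∫⁻ x in Set.Ioc b 1, ENNReal.ofReal (if x ∈ Set.Icc (0:ℝ) 1 then
      c * x ^ r * (1 - x) ^ r else 0)) = ENNReal.ofReal (∫ x in b..1, c * g x) := by
    rw [setLIntegral_congr_fun measurableSet_Ioc (fun x hx => ?_)]
    · rw [← ofReal_integral_eq_lintegral_ofReal]
      · rw [intervalIntegral.integral_of_le hb]
      · exact (hfc.integrableOn_Icc).mono_set Set.Ioc_subset_Icc_self
      · filter_upwards [ae_restrict_mem measurableSet_Ioc] with x hx
        exact mul_nonneg hcpos.le (hgnn x (by linarith [hx.1, hb2]) hx.2)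
    · obtain ⟨h0, h1⟩ := hx
      rw [if_pos ⟨by linarith, h1⟩, hg]
      ring
  -- combine
  rw [hmap, hsubset, lintegral_union (measurableSet_Iio.union measurableSet_Ioi)
      (by
        rw [Set.disjoint_union_right, Set.disjoint_union_left, Set.disjoint_union_left]
        refine ⟨⟨?_, ?_⟩, ⟨?_, ?_⟩⟩ <;>
          · rw [Set.disjoint_left]
            rintro x hx1 hx2
            simp only [Set.mem_Ico, Set.mem_Ioc, Set.mem_Iio, Set.mem_Ioi] at hx1 hx2
            first
            | linarith [hx1.1, hx2]
            | linarith [hx1.2, hx2]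
            | linarith [hx1.1, hx2, hab, hb2]),
    lintegral_union measurableSet_Ioc
      (by
        rw [Set.disjoint_left]
        rintro x hx1 hx2
        simp only [Set.mem_Ico, Set.mem_Ioc] at hx1 hx2
        linarith [hx1.2, hx2.1]),
    lintegral_union measurableSet_Ioi
      (by
        rw [Set.disjoint_left]
        rintro x hx1 hx2
        simp only [Set.mem_Iio, Set.mem_Ioi] at hx1 hx2
        linarith),
    hzero1, hzero2, hIco, hIoc, add_zero, add_zero]
  -- nonnegativity of the two interval integrals
  have hI1nn : 0 ≤ ∫ x in (0:ℝ)..a, c * g x :=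
    intervalIntegral.integral_nonneg ha fun x hx =>
      mul_nonneg hcpos.le (hgnn x hx.1 (by linarith [hx.2, hab]))
  have hI2nn : 0 ≤ ∫ x in b..1, c * g x :=
    intervalIntegral.integral_nonneg hb fun x hx =>
      mul_nonneg hcpos.le (hgnn x (by linarith [hx.1, hb2]) hx.2)
  rw [← ENNReal.ofReal_add hI1nn hI2nn]
  apply ENNReal.ofReal_le_ofReal
  -- now a purely real inequality
  rw [intervalIntegral.integral_const_mul, intervalIntegral.integral_const_mul]
  set I1 : ℝ := ∫ x in (0:ℝ)..a, g x with hI1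
  set I2 : ℝ := ∫ x in b..1, g x with hI2
  -- symmetry of the upper tail
  have hsym : I2 = ∫ x in (0:ℝ)..(1 - b), g x := by
    have h := intervalIntegral.integral_comp_sub_left (a := 0) (b := 1 - b) g 1
    simp only [sub_zero, sub_sub_cancel] at h
    rw [hI2, ← h]
    apply intervalIntegral.integral_congr
    intro x _
    show (1 - x) ^ r * (1 - (1 - x)) ^ r = x ^ r * (1 - x) ^ r
    rw [sub_sub_cancel]
    ring
  -- shift the reflected tail next to the lower tail
  have hshift : (∫ x in (0:ℝ)..(1 - b), g x) ≤ ∫ x in a..m, g x := by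
    have h := intervalIntegral.integral_comp_add_left (a := 0) (b := 1 - b) g a
    rw [add_zero, hmab] at h
    have hmono2 : (∫ x in (0:ℝ)..(1 - b), g x) ≤ ∫ x in (0:ℝ)..(1 - b), g (a + x) := by
      have hgc2 : Continuous fun x : ℝ => g (a + x) :=
        hgc.comp (continuous_const.add continuous_id)
      refine intervalIntegral.integral_mono_on (by linarith) (hgc.intervalIntegrable _ _)
        (hgc2.intervalIntegrable _ _) fun x hx => ?_
      obtain ⟨hx0, hx1⟩ := hx
      show g x ≤ g (a + x)
      exact pow_mul_pow_mono r hx0 (by linarith) (by linarith)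
    exact hmono2.trans_eq h
  have hadd : I1 + ∫ x in a..m, g x = ∫ x in (0:ℝ)..m, g x :=
    intervalIntegral.integral_add_adjacent_intervals (hgc.intervalIntegrable _ _)
      (hgc.intervalIntegrable _ _)
  have hT := integral_pow_mul_le r hm0 hm2
  have hsum : I1 + I2 ≤ (m * (1 - m)) ^ (r + 1) / (((r : ℝ) + 1) * (1 - 2 * m)) := by
    have : I1 + I2 ≤ ∫ x in (0:ℝ)..m, g x := by
      rw [← hadd, hsym]
      linarith [hshift]
    exact this.trans hT
  -- the binomial constant bound
  have hsr : (0:ℝ) < Real.sqrt (π * r) := Real.sqrt_pos.2 (by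
    have h1 : (1:ℝ) ≤ r := by exact_mod_cast hr
    nlinarith [pi_pos])
  have hKc : c ≤ ((r:ℝ) + 1) * (2 * (4 ^ r / Real.sqrt (π * r))) := by
    have hcb := centralBinom_le_real (n := r + 1) (by omega)
    have hid : (Nat.centralBinom (r + 1) : ℝ) = 2 * c / ((r:ℝ) + 1) := by
      rw [Nat.centralBinom, Nat.cast_choose ℝ (by omega : r + 1 ≤ 2 * (r + 1)),
        show 2 * (r + 1) - (r + 1) = r + 1 by omega,
        show 2 * (r + 1) = (2 * r + 1) + 1 by omega,
        Nat.factorial_succ (2 * r + 1), Nat.factorial_succ r, hc]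
      have hr1 : ((r:ℝ) + 1) ≠ 0 := by positivity
      push_cast
      field_simp
      ring
    rw [hid] at hcb
    have hsr1 : Real.sqrt (π * r) ≤ Real.sqrt (π * ((r:ℕ) + 1 : ℕ)) := by
      apply Real.sqrt_le_sqrt
      push_cast
      nlinarith [pi_pos]
    have hcb2 : 2 * c / ((r:ℝ) + 1) ≤ 4 ^ (r + 1) / Real.sqrt (π * r) := by
      refine hcb.trans ?_
      gcongr
    have hrpos : (0:ℝ) < (r:ℝ) + 1 := by positivity
    rw [div_le_div_iff₀ hrpos hsr] at hcb2
    rw [show ((r:ℝ) + 1) * (2 * (4 ^ r / Real.sqrt (π * r)))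
        = (((r:ℝ) + 1) * 2 * 4 ^ r) / Real.sqrt (π * r) by ring, le_div_iff₀ hsr]
    have h4 : (4:ℝ) ^ (r + 1) = 4 * 4 ^ r := by rw [pow_succ]; ring
    rw [h4] at hcb2
    nlinarith [hcb2]
  -- final arithmetic
  have hX : (0:ℝ) ≤ (m * (1 - m)) ^ (r + 1) := by
    apply pow_nonneg
    exact mul_nonneg hm0 (by rw [h1m]; linarith)
  have hD : (0:ℝ) < 1 - 2 * m := by linarith
  have hDeq : 2 * (b - a) - 1 = 1 - 2 * m := by rw [hm]; ring
  calc c * I1 + c * I2 = c * (I1 + I2) := by ring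
    _ ≤ c * ((m * (1 - m)) ^ (r + 1) / (((r : ℝ) + 1) * (1 - 2 * m))) :=
        mul_le_mul_of_nonneg_left hsum hcpos.le
    _ ≤ 2 * (4 ^ r / Real.sqrt (π * r)) * ((1 - (b - a)) * (b - a)) ^ (r + 1)
        / (2 * (b - a) - 1) := by
      rw [show ((1:ℝ) - (b - a)) * (b - a) = m * (1 - m) by rw [hm]; ring, hDeq,
        show c * ((m * (1 - m)) ^ (r + 1) / (((r:ℝ) + 1) * (1 - 2 * m)))
          = (c * (m * (1 - m)) ^ (r + 1)) / (((r:ℝ) + 1) * (1 - 2 * m)) by ring,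
        div_le_div_iff₀ (by positivity) hD]
      nlinarith [mul_le_mul_of_nonneg_right hKc (mul_nonneg hX hD.le)]
end

section
/- Let X₁,…,Xₙ be i.i.d. real random variables with mean μ > 0 and variance σ² satisfying σ²/μ² ≤ c² for some c > 0. Let ε > 0, let μ̂₁ > 0 be a fixed real number, set α = ε/(c²·μ̂₁) and ξ = μ/μ̂₁ − 1. Define W_{U,i} = μ̂₁ + α⁻¹·Ψ_U(α·(X_i − μ̂₁)) and W̄_U = (W_{U,1} + ⋯ + W_{U,n})/n. Then P(W̄_U > μ(1+ε)) ≤ exp(−(nε²/(2c²))·(1 − ξ²(1 + 1/c²))). -/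
open MeasureTheory ProbabilityTheory Real

/-- The upper envelope `Ψ_U(x) = ln(1 + x + x²/2)` of the influence function. -/
noncomputable def PsiU (x : ℝ) : ℝ := Real.log (1 + x + x ^ 2 / 2)

lemma exp_PsiU (x : ℝ) : Real.exp (PsiU x) = 1 + x + x ^ 2 / 2 :=
  Real.exp_log (by nlinarith [sq_nonneg (x + 1)])

/-- Chernoff-style upper-tail bound for the Catoni-style robustified sample average:
with `α = ε/(c²μ̂₁)`, `ξ = μ/μ̂₁ - 1`, and `W_{U,i} = μ̂₁ + α⁻¹Ψ_U(α(Xᵢ - μ̂₁))`,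
`P(W̄_U > μ(1+ε)) ≤ exp(-(nε²/(2c²))(1 - ξ²(1 + 1/c²)))`. -/
theorem catoni_upper_tail_bound
    {Ω : Type*} [MeasurableSpace Ω] (P : Measure Ω) [IsProbabilityMeasure P]
    (n : ℕ) (c ε μ σ μhat₁ : ℝ) (hc : 0 < c) (hε : 0 < ε) (hμ : 0 < μ)
    (hμhat₁ : 0 < μhat₁)
    (X : Fin n → Ω → ℝ)
    (hmeas : ∀ i, Measurable (X i))
    (hindep : iIndepFun X P)
    (hident : ∀ i j, IdentDistrib (X i) (X j) P P)
    (hL2 : ∀ i, MemLp (X i) 2 P)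
    (hmean : ∀ i, (∫ ω, X i ω ∂P) = μ)
    (hvar : ∀ i, variance (X i) P = σ ^ 2)
    (hrel : σ ^ 2 / μ ^ 2 ≤ c ^ 2) :
    P {ω | μ * (1 + ε) <
        (∑ i, (μhat₁ + (ε / (c ^ 2 * μhat₁))⁻¹ *
          PsiU (ε / (c ^ 2 * μhat₁) * (X i ω - μhat₁)))) / n} ≤
      ENNReal.ofReal (Real.exp (-(n * ε ^ 2 / (2 * c ^ 2)) *
        (1 - (μ / μhat₁ - 1) ^ 2 * (1 + 1 / c ^ 2)))) := by
  rcases Nat.eq_zero_or_pos n with hn | hn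
  · subst hn
    have hempty : {ω : Ω | μ * (1 + ε) <
        (∑ i : Fin 0, (μhat₁ + (ε / (c ^ 2 * μhat₁))⁻¹ *
          PsiU (ε / (c ^ 2 * μhat₁) * (X i ω - μhat₁)))) / (0:ℕ)} = ∅ := by
      ext ω
      simp only [Set.mem_setOf_eq, Set.mem_empty_iff_false, iff_false, not_lt]
      simp only [Finset.univ_eq_empty, Finset.sum_empty, Nat.cast_zero, div_zero]
      positivity
    rw [hempty]
    simp
  -- main case
  have hn' : (0:ℝ) < n := by exact_mod_cast hn
  set α : ℝ := ε / (c ^ 2 * μhat₁) with hα_def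
  have hα : 0 < α := by positivity
  set Y : Fin n → Ω → ℝ := fun i ω => PsiU (α * (X i ω - μhat₁)) with hY_def
  have hYmeas : ∀ i, Measurable (Y i) := by
    intro i
    apply Measurable.log
    have h : Measurable (fun ω => α * (X i ω - μhat₁)) :=
      ((hmeas i).sub measurable_const).const_mul α
    exact (measurable_const.add h).add ((h.pow_const 2).div_const 2)
  have hindepY : iIndepFun Y P := by
    have hg : ∀ _i : Fin n, Measurable (fun x : ℝ => PsiU (α * (x - μhat₁))) := by
      intro i
      apply Measurable.log
      have h : Measurable (fun x : ℝ => α * (x - μhat₁)) :=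
        (measurable_id.sub measurable_const).const_mul α
      exact (measurable_const.add h).add ((h.pow_const 2).div_const 2)
    exact hindep.comp _ hg
  -- integrability facts
  have hΔL2 : ∀ i, MemLp (fun ω => X i ω - μhat₁) 2 P :=
    fun i => (hL2 i).sub (memLp_const μhat₁)
  have hΔint : ∀ i, Integrable (fun ω => X i ω - μhat₁) P :=
    fun i => (hΔL2 i).integrable one_le_two
  have hΔsq : ∀ i, Integrable (fun ω => (X i ω - μhat₁) ^ 2) P := fun i => (hΔL2 i).integrable_sq
  have hform : ∀ i, (fun ω => Real.exp (1 * Y i ω))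
      = fun ω => 1 + α * (X i ω - μhat₁) + α ^ 2 / 2 * (X i ω - μhat₁) ^ 2 := by
    intro i
    funext ω
    rw [one_mul]
    show Real.exp (PsiU (α * (X i ω - μhat₁))) = _
    rw [exp_PsiU]; ring
  have hint : ∀ i, Integrable (fun ω => Real.exp (1 * Y i ω)) P := by
    intro i
    rw [hform i]
    exact ((integrable_const 1).add ((hΔint i).const_mul α)).add ((hΔsq i).const_mul _)
  set M : ℝ := 1 + α * (μ - μhat₁) + α ^ 2 / 2 * (σ ^ 2 + (μ - μhat₁) ^ 2) with hM_def
  have hXsq : ∀ i, Integrable (fun ω => X i ω ^ 2) P := fun i => (hL2 i).integrable_sq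
  have hsqint : ∀ i, ∫ ω, (X i ω - μhat₁) ^ 2 ∂P = σ ^ 2 + (μ - μhat₁) ^ 2 := by
    intro i
    have h1 := variance_eq_sub (hL2 i)
    rw [hvar i, hmean i] at h1
    have h2 : ∫ ω, (X i ω) ^ 2 ∂P = σ ^ 2 + μ ^ 2 := by
      have : (P[(X i) ^ 2] : ℝ) = ∫ ω, (X i ω) ^ 2 ∂P := by rfl
      rw [this] at h1; linarith
    have hexpand : (fun ω => (X i ω - μhat₁) ^ 2)
        = fun ω => (X i ω ^ 2 - 2 * μhat₁ * X i ω) + μhat₁ ^ 2 := by funext ω; ring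
    have hi1 : Integrable (fun ω => 2 * μhat₁ * X i ω) P :=
      ((hL2 i).integrable one_le_two).const_mul _
    have hi2 : Integrable (fun ω => X i ω ^ 2 - 2 * μhat₁ * X i ω) P := by
      exact (hXsq i).sub hi1
    rw [hexpand, integral_add hi2 (integrable_const _), integral_sub (hXsq i) hi1,
      integral_const_mul, hmean i, h2, integral_const]
    simp
    ring
  have hmgf : ∀ i, mgf (Y i) P 1 = M := by
    intro i
    have hi1 : Integrable (fun ω => α * (X i ω - μhat₁)) P := (hΔint i).const_mul α
    have hi2 : Integrable (fun ω => 1 + α * (X i ω - μhat₁)) P := by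
      exact (integrable_const 1).add hi1
    have hi3 : Integrable (fun ω => α ^ 2 / 2 * (X i ω - μhat₁) ^ 2) P :=
      (hΔsq i).const_mul _
    have hi4 : Integrable (fun ω => X i ω - μhat₁) P := hΔint i
    rw [mgf, hform i]
    rw [show (fun ω => 1 + α * (X i ω - μhat₁) + α ^ 2 / 2 * (X i ω - μhat₁) ^ 2)
        = fun ω => (1 + α * (X i ω - μhat₁)) + α ^ 2 / 2 * (X i ω - μhat₁) ^ 2 from rfl]
    rw [integral_add hi2 hi3, integral_add (integrable_const 1) hi1,
      integral_const_mul, integral_const_mul,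
      integral_sub ((hL2 i).integrable one_le_two) (integrable_const _),
      hmean i, hsqint i, integral_const]
    simp [hM_def]
  -- Chernoff bound
  set t₀ : ℝ := α * (n * (μ * (1 + ε)) - n * μhat₁) with ht₀_def
  set S : Ω → ℝ := ∑ i, Y i with hS_def
  have hint_sum : Integrable (fun ω => Real.exp (1 * S ω)) P :=
    hindepY.integrable_exp_mul_sum hYmeas (fun i _ => hint i)
  have hch := measure_ge_le_exp_mul_mgf (X := S) (μ := P) t₀ zero_le_one hint_sum
  have hmgfS : mgf S P 1 = M ^ n := by
    rw [hS_def, hindepY.mgf_sum hYmeas]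
    simp [hmgf]
  rw [hmgfS] at hch
  -- event inclusion
  have hsub : {ω | μ * (1 + ε) <
        (∑ i, (μhat₁ + α⁻¹ * PsiU (α * (X i ω - μhat₁)))) / n} ⊆ {ω | t₀ ≤ S ω} := by
    intro ω hω
    simp only [Set.mem_setOf_eq] at hω ⊢
    have hsum : (∑ i, (μhat₁ + α⁻¹ * PsiU (α * (X i ω - μhat₁))))
        = n * μhat₁ + α⁻¹ * S ω := by
      rw [hS_def]
      simp [Finset.sum_add_distrib, Finset.mul_sum, Finset.sum_apply, hY_def]
    rw [hsum, lt_div_iff₀ hn'] at hω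
    have h2 : α * (n * (μ * (1 + ε)) - n * μhat₁) ≤ α * (α⁻¹ * S ω) := by
      apply mul_le_mul_of_nonneg_left _ hα.le
      nlinarith
    rw [show α * (α⁻¹ * S ω) = S ω from by field_simp] at h2
    exact h2
  -- key algebraic inequality
  have hσ : σ ^ 2 ≤ c ^ 2 * μ ^ 2 := by
    rw [div_le_iff₀ (by positivity)] at hrel; linarith
  have hMnonneg : (0:ℝ) ≤ M := by
    have := hmgf ⟨0, hn⟩
    rw [← this]
    exact mgf_nonneg
  have hMle : M ≤ Real.exp (α * (μ - μhat₁) + α ^ 2 / 2 * (σ ^ 2 + (μ - μhat₁) ^ 2)) := by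
    have := Real.add_one_le_exp (α * (μ - μhat₁) + α ^ 2 / 2 * (σ ^ 2 + (μ - μhat₁) ^ 2))
    rw [hM_def]; linarith
  have hkey : -t₀ + n * (α * (μ - μhat₁) + α ^ 2 / 2 * (σ ^ 2 + (μ - μhat₁) ^ 2))
      ≤ -(n * ε ^ 2 / (2 * c ^ 2)) * (1 - (μ / μhat₁ - 1) ^ 2 * (1 + 1 / c ^ 2)) := by
    rw [ht₀_def, hα_def]
    have hn0 : (0:ℝ) ≤ (n:ℝ) := hn'.le
    have hcne : c ≠ 0 := hc.ne'
    have hmne : μhat₁ ≠ 0 := hμhat₁.ne'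
    have hid : -(ε / (c ^ 2 * μhat₁) * ((n:ℝ) * (μ * (1 + ε)) - (n:ℝ) * μhat₁))
        + (n:ℝ) * (ε / (c ^ 2 * μhat₁) * (μ - μhat₁)
          + (ε / (c ^ 2 * μhat₁)) ^ 2 / 2 * (σ ^ 2 + (μ - μhat₁) ^ 2))
        = -((n:ℝ) * ε ^ 2 / (2 * c ^ 2)) * (1 - (μ / μhat₁ - 1) ^ 2 * (1 + 1 / c ^ 2))
          - (n:ℝ) * ((ε / (c ^ 2 * μhat₁)) ^ 2 / 2) * (c ^ 2 * μ ^ 2 - σ ^ 2) := by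
      field_simp
      ring
    have hpos : (0:ℝ) ≤ (n:ℝ) * ((ε / (c ^ 2 * μhat₁)) ^ 2 / 2) * (c ^ 2 * μ ^ 2 - σ ^ 2) :=
      mul_nonneg (mul_nonneg hn0 (by positivity)) (by linarith)
    linarith [hid]
  have hfinal : Real.exp (-1 * t₀) * M ^ n
      ≤ Real.exp (-(n * ε ^ 2 / (2 * c ^ 2)) * (1 - (μ / μhat₁ - 1) ^ 2 * (1 + 1 / c ^ 2))) := by
    calc Real.exp (-1 * t₀) * M ^ n
        ≤ Real.exp (-1 * t₀) * Real.exp (α * (μ - μhat₁)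
            + α ^ 2 / 2 * (σ ^ 2 + (μ - μhat₁) ^ 2)) ^ n := by
          apply mul_le_mul_of_nonneg_left _ (Real.exp_pos _).le
          exact pow_le_pow_left₀ hMnonneg hMle n
      _ = Real.exp (-t₀ + n * (α * (μ - μhat₁) + α ^ 2 / 2 * (σ ^ 2 + (μ - μhat₁) ^ 2))) := by
          rw [← Real.exp_nat_mul, ← Real.exp_add]; ring_nf
      _ ≤ _ := Real.exp_le_exp.mpr hkey
  calc P {ω | μ * (1 + ε) <
        (∑ i, (μhat₁ + α⁻¹ * PsiU (α * (X i ω - μhat₁)))) / n}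
      ≤ P {ω | t₀ ≤ S ω} := measure_mono hsub
    _ = ENNReal.ofReal (P {ω | t₀ ≤ S ω}).toReal := (ENNReal.ofReal_toReal (measure_ne_top _ _)).symm
    _ ≤ ENNReal.ofReal (Real.exp (-1 * t₀) * M ^ n) := ENNReal.ofReal_le_ofReal hch
    _ ≤ _ := ENNReal.ofReal_le_ofReal hfinal
end

section
/- Let Z be a standard normal random variable and let δ ∈ (0, 1/√(2π)). Let a_δ be the unique real number with P(Z ≥ a_δ) = δ. Then a_δ² ≥ 2·ln(1/(√(2π)δ)) + 2·ln(√(2ln(1/(√(2π)δ)))/(2ln(1/(√(2π)δ)) + 1)). -/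
open MeasureTheory ProbabilityTheory Real Set Filter

noncomputable def psiGQ (x : ℝ) : ℝ := Real.exp (-(x^2/2))
noncomputable def gGQ (x : ℝ) : ℝ := psiGQ x * (Real.sqrt (x^2+4) - x) / 2
noncomputable def gGQ' (x : ℝ) : ℝ :=
  ((-x * psiGQ x) * (Real.sqrt (x^2+4) - x) + psiGQ x * (x / Real.sqrt (x^2+4) - 1)) / 2

lemma psiGQ_pos (x : ℝ) : 0 < psiGQ x := Real.exp_pos _

lemma sqrtGQ (x : ℝ) : (Real.sqrt (x^2+4))^2 = x^2+4 := Real.sq_sqrt (by positivity)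

lemma sqrtGQ_pos (x : ℝ) : 0 < Real.sqrt (x^2+4) := Real.sqrt_pos.2 (by positivity)

lemma le_sqrtGQ (x : ℝ) (hx : 0 ≤ x) : x ≤ Real.sqrt (x^2+4) := by
  nlinarith [sqrtGQ x, sqrtGQ_pos x]

lemma hasDerivAt_gGQ (x : ℝ) : HasDerivAt gGQ (gGQ' x) x := by
  have h1 : HasDerivAt (fun x : ℝ => -(x^2/2)) (-x) x := by
    have := ((hasDerivAt_pow 2 x).div_const 2).neg
    refine this.congr_deriv ?_
    norm_num
  have h2 : HasDerivAt psiGQ (psiGQ x * (-x)) x := h1.exp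
  have h3 : HasDerivAt (fun x : ℝ => x^2+4) (2*x) x := by
    simpa using (hasDerivAt_pow 2 x).add_const 4
  have h4 : HasDerivAt (fun x : ℝ => Real.sqrt (x^2+4))
      (2*x / (2 * Real.sqrt (x^2+4))) x := h3.sqrt (by positivity)
  have h5 : HasDerivAt (fun x : ℝ => Real.sqrt (x^2+4) - x)
      (x / Real.sqrt (x^2+4) - 1) x := by
    have := h4.sub (hasDerivAt_id x)
    have he : 2*x / (2 * Real.sqrt (x^2+4)) = x / Real.sqrt (x^2+4) := by
      rw [mul_div_mul_left _ _ (two_ne_zero)]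
    exact this.congr_deriv (by rw [he])
  have := (h2.mul h5).div_const 2
  refine this.congr_deriv ?_
  unfold gGQ'
  ring

lemma gGQ'_bounds (x : ℝ) (hx : 0 ≤ x) : 0 ≤ -gGQ' x ∧ -gGQ' x ≤ psiGQ x := by
  have hr2 := sqrtGQ x
  have hr0 := sqrtGQ_pos x
  have hrx := le_sqrtGQ x hx
  set r := Real.sqrt (x^2+4) with hrdef
  have hu : x / r * r = x := div_mul_cancel₀ _ hr0.ne'
  have hq1 : x / r ≤ 1 := (div_le_one hr0).2 hrx
  have hq0 : 0 ≤ x / r := by positivity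
  have hpsi := psiGQ_pos x
  have hform : -gGQ' x = psiGQ x * (x * (r - x) + (1 - x / r)) / 2 := by
    unfold gGQ'
    ring
  constructor
  · rw [hform]
    have : 0 ≤ x * (r - x) + (1 - x / r) := by nlinarith
    positivity
  · rw [hform]
    have h4 : x^3 + 3*x ≤ (x^2+1)*r := by nlinarith [sq_nonneg ((x^2+1)*r - (x^3+3*x))]
    have hkey : x * (r - x) + (1 - x / r) ≤ 2 := by nlinarith
    nlinarith

lemma psiGQ_tendsto : Tendsto psiGQ atTop (nhds 0) := by
  have h1 : Tendsto (fun x : ℝ => x^2/2) atTop atTop :=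
    (tendsto_pow_atTop two_ne_zero).atTop_div_const (by norm_num)
  have h2 : Tendsto (fun x : ℝ => -(x^2/2)) atTop atBot := tendsto_neg_atBot_iff.2 h1
  exact Real.tendsto_exp_atBot.comp h2

lemma gGQ_tendsto : Tendsto gGQ atTop (nhds 0) := by
  apply tendsto_of_tendsto_of_tendsto_of_le_of_le' tendsto_const_nhds psiGQ_tendsto
  · filter_upwards [eventually_ge_atTop (0:ℝ)] with x hx
    have h1 := le_sqrtGQ x hx
    have h2 := psiGQ_pos x
    unfold gGQ
    nlinarith
  · filter_upwards [eventually_ge_atTop (0:ℝ)] with x hx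
    have hr2 := sqrtGQ x
    have hle : Real.sqrt (x^2+4) ≤ x + 2 := by
      nlinarith [sqrtGQ_pos x]
    have := psiGQ_pos x
    unfold gGQ
    nlinarith

lemma psiGQ_integrableOn (t : ℝ) : IntegrableOn psiGQ (Ioi t) := by
  have : Integrable psiGQ := by
    have := integrable_exp_neg_mul_sq (show (0:ℝ) < 1/2 by norm_num)
    refine this.congr ?_
    · exact ae_of_all _ fun x => by unfold psiGQ; ring_nf
  exact this.integrableOn

lemma measurable_gGQ' : Measurable gGQ' := by
  unfold gGQ' psiGQ
  fun_prop

lemma gGQ'_integrableOn (t : ℝ) (ht : 0 ≤ t) : IntegrableOn gGQ' (Ioi t) := by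
  refine Integrable.mono (psiGQ_integrableOn t) measurable_gGQ'.aestronglyMeasurable ?_
  rw [ae_restrict_iff' measurableSet_Ioi]
  refine ae_of_all _ fun x hx => ?_
  have hx0 : 0 ≤ x := le_trans ht (le_of_lt hx)
  obtain ⟨h1, h2⟩ := gGQ'_bounds x hx0
  rw [Real.norm_eq_abs, Real.norm_eq_abs, abs_of_pos (psiGQ_pos x), abs_le]
  constructor <;> linarith

lemma tail_lb (t : ℝ) (ht : 0 ≤ t) :
    psiGQ t * (Real.sqrt (t^2+4) - t) / 2 ≤ ∫ x in Ioi t, psiGQ x := by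
  have hFTC : ∫ x in Ioi t, gGQ' x = 0 - gGQ t :=
    integral_Ioi_of_hasDerivAt_of_tendsto' (fun x _ => hasDerivAt_gGQ x)
      (gGQ'_integrableOn t ht) gGQ_tendsto
  have hmono : ∫ x in Ioi t, (-gGQ' x) ≤ ∫ x in Ioi t, psiGQ x := by
    refine setIntegral_mono_on ((gGQ'_integrableOn t ht).neg) (psiGQ_integrableOn t)
      measurableSet_Ioi fun x hx => ?_
    exact (gGQ'_bounds x (le_trans ht (le_of_lt hx))).2
  rw [integral_neg, hFTC] at hmono
  unfold gGQ at hmono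
  linarith

lemma pdfGQ_eq (x : ℝ) : gaussianPDFReal 0 1 x = (Real.sqrt (2*π))⁻¹ * psiGQ x := by
  simp [gaussianPDFReal, psiGQ, neg_div]

noncomputable def TGQ (a : ℝ) : ℝ := ∫ x in Ici a, gaussianPDFReal 0 1 x

lemma TGQ_nonneg (a : ℝ) : 0 ≤ TGQ a :=
  setIntegral_nonneg measurableSet_Ici fun x _ => gaussianPDFReal_nonneg 0 1 x

lemma TGQ_strict {a b : ℝ} (hab : a < b) : TGQ b < TGQ a := by
  have hint : Integrable (gaussianPDFReal 0 1) := integrable_gaussianPDFReal 0 1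
  have hsplit : TGQ a = (∫ x in Ioc a b, gaussianPDFReal 0 1 x) + TGQ b := by
    unfold TGQ
    rw [integral_Ici_eq_integral_Ioi, integral_Ici_eq_integral_Ioi,
      ← Set.Ioc_union_Ioi_eq_Ioi hab.le,
      setIntegral_union (Set.Ioc_disjoint_Ioi le_rfl) measurableSet_Ioi
        hint.integrableOn hint.integrableOn]
  have hpos : 0 < ∫ x in Ioc a b, gaussianPDFReal 0 1 x := by
    rw [← intervalIntegral.integral_of_le hab.le]
    exact intervalIntegral.intervalIntegral_pos_of_pos hint.intervalIntegrable
      (fun x => gaussianPDFReal_pos 0 1 x one_ne_zero) hab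
  linarith

lemma TGQ_tail_lb (t : ℝ) (ht : 0 ≤ t) :
    (Real.sqrt (2*π))⁻¹ * (psiGQ t * (Real.sqrt (t^2+4) - t) / 2) ≤ TGQ t := by
  unfold TGQ
  rw [integral_Ici_eq_integral_Ioi]
  calc (Real.sqrt (2*π))⁻¹ * (psiGQ t * (Real.sqrt (t^2+4) - t) / 2)
      ≤ (Real.sqrt (2*π))⁻¹ * ∫ x in Ioi t, psiGQ x := by
        refine mul_le_mul_of_nonneg_left (tail_lb t ht) ?_
        positivity
    _ = ∫ x in Ioi t, gaussianPDFReal 0 1 x := by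
        rw [← integral_const_mul]
        exact setIntegral_congr_fun measurableSet_Ioi fun x _ => (pdfGQ_eq x).symm

lemma sqrt_sub_mono {b s : ℝ} (hb : 0 ≤ b) (hbs : b ≤ s) :
    Real.sqrt (s^2+4) - s ≤ Real.sqrt (b^2+4) - b := by
  have hrb2 := sqrtGQ b
  have hrs2 := sqrtGQ s
  have hrb0 := sqrtGQ_pos b
  have hrs0 := sqrtGQ_pos s
  have hrbb := le_sqrtGQ b hb
  have hrss := le_sqrtGQ s (hb.trans hbs)
  have hrbs : Real.sqrt (b^2+4) ≤ Real.sqrt (s^2+4) :=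
    Real.sqrt_le_sqrt (by nlinarith)
  set rb := Real.sqrt (b^2+4)
  set rs := Real.sqrt (s^2+4)
  nlinarith [mul_pos (show (0:ℝ) < rb - b + (rs - s) by nlinarith)
    (show (0:ℝ) < rs + s by nlinarith)]

lemma sqrt_ineq2 (s : ℝ) (hs : 0 ≤ s) : 2*s ≤ (s^2+1) * (Real.sqrt (s^2+4) - s) := by
  have hrs2 := sqrtGQ s
  have hrs0 := sqrtGQ_pos s
  have hrss := le_sqrtGQ s hs
  set rs := Real.sqrt (s^2+4)
  have h4 : s^3 + 3*s ≤ (s^2+1)*rs := by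
    nlinarith [sq_nonneg ((s^2+1)*rs - (s^3+3*s))]
  nlinarith

/-- If `Z` is standard normal, `δ ∈ (0, 1/√(2π))`, and `a_δ` is the upper `δ`-quantile,
i.e. `P(Z ≥ a_δ) = δ`, then
`a_δ² ≥ 2 ln(1/(√(2π)δ)) + 2 ln(√(2 ln(1/(√(2π)δ))) / (2 ln(1/(√(2π)δ)) + 1))`. -/
theorem gaussian_quantile_lower_bound
    {Ω : Type*} [MeasurableSpace Ω] (P : Measure Ω) [IsProbabilityMeasure P]
    (Z : Ω → ℝ) (hZmeas : Measurable Z)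
    (hZ : Measure.map Z P = gaussianReal 0 1)
    (δ : ℝ) (hδ : δ ∈ Set.Ioo 0 (1 / Real.sqrt (2 * π)))
    (aδ : ℝ) (haδ : P {ω | aδ ≤ Z ω} = ENNReal.ofReal δ) :
    aδ ^ 2 ≥ 2 * Real.log (1 / (Real.sqrt (2 * π) * δ)) +
      2 * Real.log (Real.sqrt (2 * Real.log (1 / (Real.sqrt (2 * π) * δ))) /
        (2 * Real.log (1 / (Real.sqrt (2 * π) * δ)) + 1)) := by
  obtain ⟨hδ0, hδ1⟩ := hδ
  have hsπ : 0 < Real.sqrt (2*π) := Real.sqrt_pos.2 (by positivity)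
  set L := Real.log (1 / (Real.sqrt (2 * π) * δ)) with hLdef
  have hδπ : Real.sqrt (2 * π) * δ < 1 := by
    calc Real.sqrt (2 * π) * δ < Real.sqrt (2 * π) * (1 / Real.sqrt (2 * π)) :=
          mul_lt_mul_of_pos_left hδ1 hsπ
      _ = 1 := by field_simp
  have hδπ0 : 0 < Real.sqrt (2 * π) * δ := by positivity
  have hL : 0 < L := Real.log_pos (by rw [lt_div_iff₀ hδπ0]; linarith)
  have hexpL : Real.exp L = 1 / (Real.sqrt (2 * π) * δ) := Real.exp_log (by positivity)
  set s := Real.sqrt (2 * L) with hsdef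
  have hs2 : s ^ 2 = 2 * L := Real.sq_sqrt (by positivity)
  have hs0 : 0 < s := Real.sqrt_pos.2 (by positivity)
  -- identify the tail probability
  have hTaδ : TGQ aδ = δ := by
    have hmap : P {ω | aδ ≤ Z ω} = gaussianReal 0 1 (Ici aδ) := by
      rw [← hZ, Measure.map_apply hZmeas measurableSet_Ici]
      rfl
    rw [hmap, gaussianReal_apply_eq_integral 0 one_ne_zero (Ici aδ)] at haδ
    exact (ENNReal.ofReal_eq_ofReal_iff (TGQ_nonneg aδ) hδ0.le).1 haδ
  rcases le_or_gt (2 * L + 2 * Real.log (s / (2 * L + 1))) 0 with hR | hR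
  · calc aδ ^ 2 ≥ 0 := sq_nonneg aδ
      _ ≥ _ := hR
  · set R := 2 * L + 2 * Real.log (s / (2 * L + 1)) with hRdef
    set b := Real.sqrt R with hbdef
    have hb2 : b ^ 2 = R := Real.sq_sqrt hR.le
    have hb0 : 0 < b := Real.sqrt_pos.2 hR
    have hlog : Real.log (s / (2 * L + 1)) ≤ 0 := by
      apply Real.log_nonpos (by positivity)
      rw [div_le_one (by linarith)]
      nlinarith [sq_nonneg (s - 1)]
    have hbs : b ≤ s := by
      have h1 : R ≤ s ^ 2 := by rw [hs2, hRdef]; linarith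
      calc b = Real.sqrt R := rfl
        _ ≤ Real.sqrt (s ^ 2) := Real.sqrt_le_sqrt h1
        _ = s := Real.sqrt_sq hs0.le
    -- value of the density at b
    have hlogpos : (0:ℝ) < (2 * L + 1) / s := by positivity
    have hexparg : -(b ^ 2 / 2) = -L + Real.log ((2 * L + 1) / s) := by
      have h5 : Real.log ((2 * L + 1) / s) = - Real.log (s / (2 * L + 1)) := by
        rw [← Real.log_inv, inv_div]
      rw [hb2, hRdef, h5]; ring
    have hpsib : psiGQ b = Real.sqrt (2 * π) * δ * ((2 * L + 1) / s) := by
      unfold psiGQ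
      rw [hexparg, Real.exp_add, Real.exp_neg, hexpL, Real.exp_log hlogpos, one_div, inv_inv]
    -- tail at b is at least δ
    have hchain : 2 * s ≤ (2 * L + 1) * (Real.sqrt (b ^ 2 + 4) - b) := by
      have hA := sqrt_sub_mono hb0.le hbs
      have hB := sqrt_ineq2 s hs0.le
      have h1 : (s^2+1) * (Real.sqrt (s^2+4) - s) ≤ (s^2+1) * (Real.sqrt (b^2+4) - b) :=
        mul_le_mul_of_nonneg_left hA (by positivity)
      rw [show 2 * L + 1 = s ^ 2 + 1 by rw [hs2]]
      linarith
    have hTb : δ ≤ TGQ b := by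
      refine le_trans ?_ (TGQ_tail_lb b hb0.le)
      rw [hpsib]
      have heq : (Real.sqrt (2*π))⁻¹ * (Real.sqrt (2 * π) * δ * ((2 * L + 1) / s) *
          (Real.sqrt (b^2+4) - b) / 2)
          = δ * ((2 * L + 1) * (Real.sqrt (b^2+4) - b)) / (2 * s) := by
        field_simp
      rw [heq, le_div_iff₀ (by linarith : (0:ℝ) < 2 * s)]
      nlinarith [mul_le_mul_of_nonneg_left hchain hδ0.le]
    -- conclude
    have hba : b ≤ aδ := by
      by_contra h
      push_neg at h
      have := TGQ_strict h
      rw [hTaδ] at this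
      linarith
    calc aδ ^ 2 ≥ b ^ 2 := by nlinarith
      _ = R := hb2
end

section
/- Let k, m ≥ 1 be integers and M ≥ 1. For each i ∈ {0,…,k−1}, let r_i ∈ [1/M, 1] and let R_i be the sample average of m i.i.d. Bernoulli(r_i) random variables, with R₀,…,R_{k−1} independent. Let r̂ = R₀·R₁⋯R_{k−1}. Then Var(r̂)/E[r̂]² ≤ [∏_{i=0}^{k−1} (1 + (1−r_i)/(m·r_i))] − 1 ≤ exp(k(M−1)/m) − 1. -/
open MeasureTheory ProbabilityTheory Finset

section aux
variable {Ω : Type*} [MeasurableSpace Ω] {P : Measure Ω} [IsProbabilityMeasure P]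

lemma aux_integral_prod {ι : Type*} {f : ι → Ω → ℝ}
    (hindep : iIndepFun f P)
    (hmeas : ∀ i, Measurable (f i)) (hint : ∀ i, Integrable (f i) P)
    (T : Finset ι) :
    Integrable (fun ω => ∏ p ∈ T, f p ω) P ∧
      (∫ ω, ∏ p ∈ T, f p ω ∂P) = ∏ p ∈ T, ∫ ω, f p ω ∂P := by
  classical
  induction T using Finset.induction_on with
  | empty => simp
  | @insert i s hi ih =>
    have hIF : IndepFun (∏ j ∈ s, f j) (f i) P :=
      hindep.indepFun_finsetProd_of_notMem hmeas hi
    have hps : (fun ω => ∏ p ∈ s, f p ω) = ∏ j ∈ s, f j := by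
      ext ω; simp [Finset.prod_apply]
    have hint' : Integrable (∏ j ∈ s, f j) P := hps ▸ ih.1
    have hmul : Integrable ((∏ j ∈ s, f j) * f i) P := hIF.integrable_mul hint' (hint i)
    have heq : (fun ω => ∏ p ∈ insert i s, f p ω) = (∏ j ∈ s, f j) * f i := by
      ext ω; simp [Finset.prod_insert hi, Finset.prod_apply, mul_comm]
    constructor
    · rw [heq]; exact hmul
    · rw [heq, hIF.integral_mul_eq_mul_integral hint'.aestronglyMeasurable (hint i).aestronglyMeasurable, Finset.prod_insert hi,
        ← hps, ih.2, mul_comm]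

lemma bern_mem {Z : Ω → ℝ} (hZ : Measurable Z) {r : ℝ}
    (hlaw : Measure.map Z P =
      ENNReal.ofReal (1 - r) • Measure.dirac (0 : ℝ) + ENNReal.ofReal r • Measure.dirac (1 : ℝ)) :
    ∀ᵐ ω ∂P, Z ω = 0 ∨ Z ω = 1 := by
  have hs : MeasurableSet ({0, 1} : Set ℝ) := by measurability
  have h0 : P (Z ⁻¹' ({0, 1} : Set ℝ)ᶜ) = 0 := by
    rw [← Measure.map_apply hZ hs.compl, hlaw]
    simp [Measure.dirac_apply' _ hs.compl]
  filter_upwards [measure_eq_zero_iff_ae_notMem.mp h0] with ω hω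
  by_contra hc
  push_neg at hc
  exact hω (by simp [Set.mem_compl_iff, hc.1, hc.2])

lemma bern_int {Z : Ω → ℝ} (hZ : Measurable Z) {r : ℝ} (hr0 : 0 ≤ r)
    (hlaw : Measure.map Z P =
      ENNReal.ofReal (1 - r) • Measure.dirac (0 : ℝ) + ENNReal.ofReal r • Measure.dirac (1 : ℝ)) :
    Integrable Z P ∧ ∫ ω, Z ω ∂P = r := by
  have hb := bern_mem hZ hlaw
  have hbd : ∀ᵐ ω ∂P, ‖Z ω‖ ≤ 1 := by
    filter_upwards [hb] with ω hω
    rcases hω with h | h <;> simp [h]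
  have hint : Integrable Z P :=
    memLp_one_iff_integrable.mp (MemLp.of_bound hZ.aestronglyMeasurable 1 hbd)
  refine ⟨hint, ?_⟩
  have hid : ∀ a : ℝ, Integrable (fun x : ℝ => x) (Measure.dirac a) := fun a =>
    (integrable_const a).congr (ae_eq_dirac (fun x : ℝ => x)).symm
  have : ∫ ω, Z ω ∂P = ∫ x, x ∂(Measure.map Z P) :=
    (integral_map hZ.aemeasurable aestronglyMeasurable_id).symm
  rw [this, hlaw, integral_add_measure ((hid 0).smul_measure ENNReal.ofReal_ne_top)
      ((hid 1).smul_measure ENNReal.ofReal_ne_top),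
    integral_smul_measure, integral_smul_measure]
  have h0 : ∫ x : ℝ, x ∂(Measure.dirac 0) = 0 := by rw [integral_dirac]
  have h1 : ∫ x : ℝ, x ∂(Measure.dirac 1) = 1 := by rw [integral_dirac]
  rw [h0, h1]
  simp [ENNReal.toReal_ofReal hr0]

end aux

/-- The product estimator `r̂ = R₀⋯R_{k-1}` built from independent sample proportions,
where `Rᵢ` is the average of `m` i.i.d. Bernoulli(`rᵢ`) samples with `rᵢ ∈ [1/M, 1]`,
satisfies `Var(r̂)/E[r̂]² ≤ ∏ᵢ(1 + (1-rᵢ)/(m·rᵢ)) - 1 ≤ exp(k(M-1)/m) - 1`. -/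
theorem relative_variance_bernoulli_product_estimator
    {Ω : Type*} [MeasurableSpace Ω] (P : Measure Ω) [IsProbabilityMeasure P]
    (k m : ℕ) (hk : 1 ≤ k) (hm : 1 ≤ m)
    (M : ℝ) (hM : 1 ≤ M)
    (r : Fin k → ℝ) (hr : ∀ i, r i ∈ Set.Icc (1 / M) 1)
    (X : Fin k → Fin m → Ω → ℝ)
    (hmeas : ∀ i j, Measurable (X i j))
    (hindep : iIndepFun (fun p : Fin k × Fin m => X p.1 p.2) P)
    (hlaw : ∀ i j, Measure.map (X i j) P =
      ENNReal.ofReal (1 - r i) • Measure.dirac (0 : ℝ) +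
        ENNReal.ofReal (r i) • Measure.dirac (1 : ℝ)) :
    variance (fun ω => ∏ i, (∑ j, X i j ω) / m) P /
        (∫ ω, ∏ i, (∑ j, X i j ω) / m ∂P) ^ 2 ≤
      (∏ i, (1 + (1 - r i) / (m * r i))) - 1 ∧
    (∏ i, (1 + (1 - r i) / (m * r i))) - 1 ≤ Real.exp (k * (M - 1) / m) - 1 := by
  classical
  have hM0 : (0:ℝ) < M := lt_of_lt_of_le one_pos hM
  have hrpos : ∀ i, 0 < r i := fun i =>
    lt_of_lt_of_le (by positivity) (hr i).1
  have hr1 : ∀ i, r i ≤ 1 := fun i => (hr i).2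
  have hm0 : (0:ℝ) < m := by exact_mod_cast hm
  have hXmem : ∀ i j, ∀ᵐ ω ∂P, X i j ω = 0 ∨ X i j ω = 1 :=
    fun i j => bern_mem (hmeas i j) (hlaw i j)
  have hXint : ∀ i j, Integrable (X i j) P :=
    fun i j => (bern_int (hmeas i j) (hrpos i).le (hlaw i j)).1
  have hXE : ∀ i j, ∫ ω, X i j ω ∂P = r i :=
    fun i j => (bern_int (hmeas i j) (hrpos i).le (hlaw i j)).2
  -- the good event
  have hG : ∀ᵐ ω ∂P, ∀ i j, X i j ω = 0 ∨ X i j ω = 1 := by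
    rw [ae_all_iff]; intro i; rw [ae_all_iff]; exact hXmem i
  -- L1 : expectation of products over pair finsets
  have L1 : ∀ T : Finset (Fin k × Fin m),
      Integrable (fun ω => ∏ p ∈ T, X p.1 p.2 ω) P ∧
        (∫ ω, ∏ p ∈ T, X p.1 p.2 ω ∂P) = ∏ p ∈ T, r p.1 := by
    intro T
    obtain ⟨h1, h2⟩ := aux_integral_prod hindep (fun p => hmeas p.1 p.2)
      (fun p => hXint p.1 p.2) T
    exact ⟨h1, by rw [h2]; exact Finset.prod_congr rfl fun p _ => hXE p.1 p.2⟩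
  -- L2 : block form
  have L2 : ∀ T : Fin k → Finset (Fin m),
      Integrable (fun ω => ∏ i, ∏ j ∈ T i, X i j ω) P ∧
        (∫ ω, ∏ i, ∏ j ∈ T i, X i j ω ∂P) = ∏ i, r i ^ (T i).card := by
    intro T
    set T' : Finset (Fin k × Fin m) :=
      Finset.univ.biUnion (fun i => (T i).image (fun j => (i, j))) with hT'
    have hdisj : Set.PairwiseDisjoint ↑(Finset.univ : Finset (Fin k))
        (fun i => (T i).image (fun j => (i, j))) := by
      intro a _ b _ hab
      simp only [Finset.disjoint_left]
      rintro p hp hq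
      simp only [Finset.mem_image] at hp hq
      obtain ⟨j1, _, rfl⟩ := hp
      obtain ⟨j2, _, h2⟩ := hq
      have h3 := congrArg Prod.fst h2
      simp only at h3
      exact hab h3.symm
    have hprod : ∀ g : Fin k × Fin m → ℝ,
        ∏ p ∈ T', g p = ∏ i, ∏ j ∈ T i, g (i, j) := by
      intro g
      rw [hT', Finset.prod_biUnion hdisj]
      refine Finset.prod_congr rfl fun i _ => ?_
      refine Finset.prod_image ?_
      intro a _ b _ h
      simpa using congrArg Prod.snd h
    have hfun : (fun ω => ∏ p ∈ T', X p.1 p.2 ω) = fun ω => ∏ i, ∏ j ∈ T i, X i j ω := by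
      funext ω; exact hprod (fun p => X p.1 p.2 ω)
    obtain ⟨h1, h2⟩ := L1 T'
    rw [hfun] at h1 h2
    refine ⟨h1, ?_⟩
    rw [h2]
    have := hprod (fun p => r p.1)
    simp only at this
    rw [this]
    exact Finset.prod_congr rfl fun i _ => by rw [Finset.prod_const]
  -- First moment of F = ∏ i, ∑ j, X i j
  have hexp1 : ∀ ω, ∏ i, ∑ j, X i j ω =
      ∑ g : Fin k → Fin m, ∏ i, X i (g i) ω := by
    intro ω
    exact Fintype.prod_sum _
  have hterm1 : ∀ g : Fin k → Fin m,
      Integrable (fun ω => ∏ i, X i (g i) ω) P ∧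
        (∫ ω, ∏ i, X i (g i) ω ∂P) = ∏ i, r i := by
    intro g
    obtain ⟨h1, h2⟩ := L2 (fun i => {g i})
    simp only [Finset.prod_singleton, Finset.card_singleton, pow_one] at h1 h2
    exact ⟨h1, h2⟩
  have hFint : Integrable (fun ω => ∏ i, ∑ j, X i j ω) P := by
    have : (fun ω => ∏ i, ∑ j, X i j ω)
        = fun ω => ∑ g : Fin k → Fin m, ∏ i, X i (g i) ω := funext hexp1
    rw [this]
    exact integrable_finset_sum _ fun g _ => (hterm1 g).1
  have hFE : (∫ ω, ∏ i, ∑ j, X i j ω ∂P) = (m:ℝ)^k * ∏ i, r i := by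
    simp only [hexp1]
    rw [integral_finset_sum _ fun g _ => (hterm1 g).1]
    simp only [fun g : Fin k → Fin m => (hterm1 g).2]
    rw [Finset.sum_const, Finset.card_univ]
    simp [Fintype.card_fun, mul_comm]
  -- Second moment
  have hexp2 : ∀ᵐ ω ∂P, (∏ i, ∑ j, X i j ω)^2 =
      ∑ h : Fin k → Fin m × Fin m, ∏ i, ∏ j ∈ ({(h i).1, (h i).2} : Finset (Fin m)), X i j ω := by
    filter_upwards [hG] with ω hω
    have hsq : ∀ i, (∑ j, X i j ω)^2 = ∑ q : Fin m × Fin m, X i q.1 ω * X i q.2 ω := by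
      intro i
      rw [sq, Finset.sum_mul_sum, ← Finset.univ_product_univ, Finset.sum_product]
    calc (∏ i, ∑ j, X i j ω)^2 = ∏ i, (∑ j, X i j ω)^2 := by
          rw [← Finset.prod_pow]
      _ = ∏ i, ∑ q : Fin m × Fin m, X i q.1 ω * X i q.2 ω := by
          exact Finset.prod_congr rfl fun i _ => hsq i
      _ = ∑ h : Fin k → Fin m × Fin m, ∏ i, X i (h i).1 ω * X i (h i).2 ω :=
          Fintype.prod_sum _
      _ = ∑ h : Fin k → Fin m × Fin m,
            ∏ i, ∏ j ∈ ({(h i).1, (h i).2} : Finset (Fin m)), X i j ω := by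
          refine Finset.sum_congr rfl fun h _ => Finset.prod_congr rfl fun i _ => ?_
          by_cases hq : (h i).1 = (h i).2
          · rw [hq, Finset.pair_eq_singleton, Finset.prod_singleton]
            rcases hω i (h i).2 with h0 | h0 <;> rw [h0] <;> ring
          · rw [Finset.prod_pair hq]
    done
  have hterm2 : ∀ h : Fin k → Fin m × Fin m,
      Integrable (fun ω => ∏ i, ∏ j ∈ ({(h i).1, (h i).2} : Finset (Fin m)), X i j ω) P ∧
        (∫ ω, ∏ i, ∏ j ∈ ({(h i).1, (h i).2} : Finset (Fin m)), X i j ω ∂P)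
          = ∏ i, r i ^ ({(h i).1, (h i).2} : Finset (Fin m)).card :=
    fun h => L2 _
  have hF2int : Integrable (fun ω => (∏ i, ∑ j, X i j ω)^2) P := by
    have hsum : Integrable (fun ω => ∑ h : Fin k → Fin m × Fin m,
        ∏ i, ∏ j ∈ ({(h i).1, (h i).2} : Finset (Fin m)), X i j ω) P :=
      integrable_finset_sum _ fun h _ => (hterm2 h).1
    refine hsum.congr ?_
    filter_upwards [hexp2] with ω hω
    exact hω.symm
  have hF2E : (∫ ω, (∏ i, ∑ j, X i j ω)^2 ∂P)
      = ∏ i, ((m:ℝ) * r i + (m:ℝ) * ((m:ℝ) - 1) * (r i)^2) := by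
    rw [integral_congr_ae hexp2,
      integral_finset_sum _ fun h _ => (hterm2 h).1]
    simp only [fun h : Fin k → Fin m × Fin m => (hterm2 h).2]
    rw [← Fintype.prod_sum (fun i (q : Fin m × Fin m) => r i ^ ({q.1, q.2} : Finset (Fin m)).card)]
    refine Finset.prod_congr rfl fun i _ => ?_
    -- ∑ q : Fin m × Fin m, r i ^ card {q.1, q.2} = m r + m (m-1) r²
    rw [← Finset.univ_product_univ, Finset.sum_product]
    have hinner : ∀ j1 : Fin m, ∑ j2 : Fin m, r i ^ ({j1, j2} : Finset (Fin m)).card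
        = (m:ℝ) * (r i)^2 + (r i - (r i)^2) := by
      intro j1
      have : ∀ j2 : Fin m, r i ^ ({j1, j2} : Finset (Fin m)).card
          = (r i)^2 + (if j2 = j1 then r i - (r i)^2 else 0) := by
        intro j2
        by_cases h12 : j1 = j2
        · subst h12; simp [Finset.pair_eq_singleton]
        · rw [Finset.card_pair h12, if_neg (Ne.symm h12)]; ring
      simp only [this, Finset.sum_add_distrib, Finset.sum_const, Finset.card_univ,
        Fintype.card_fin, Finset.sum_ite_eq' Finset.univ j1, Finset.mem_univ, if_true]
      push_cast; ring
    simp only [hinner, Finset.sum_const, Finset.card_univ, Fintype.card_fin]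
    push_cast; ring
  -- the estimator
  set Y : Ω → ℝ := fun ω => ∏ i, (∑ j, X i j ω) / m with hY
  have hYeq : ∀ ω, Y ω = (∏ i, ∑ j, X i j ω) / (m:ℝ)^k := by
    intro ω
    simp only [hY]
    rw [Finset.prod_div_distrib, Finset.prod_const, Finset.card_univ, Fintype.card_fin]
  have hEY : (∫ ω, Y ω ∂P) = ∏ i, r i := by
    simp only [hYeq]
    rw [integral_div, hFE]
    field_simp
  have hEY2 : (∫ ω, Y ω ^ 2 ∂P) = ∏ i, (((m:ℝ) * r i + (m:ℝ) * ((m:ℝ) - 1) * (r i)^2) / (m:ℝ)^2) := by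
    have : ∀ ω, Y ω ^ 2 = (∏ i, ∑ j, X i j ω)^2 / ((m:ℝ)^2)^k := by
      intro ω; rw [hYeq]; rw [div_pow, ← pow_mul, ← pow_mul, Nat.mul_comm]
    simp only [this]
    rw [integral_div, hF2E, Finset.prod_div_distrib, Finset.prod_const, Finset.card_univ,
      Fintype.card_fin]
  -- Memℒp
  have hYmeas : Measurable Y := by
    apply Finset.measurable_prod
    intro i _
    exact (Finset.measurable_sum _ fun j _ => hmeas i j).div_const _
  have hYbd : ∀ᵐ ω ∂P, ‖Y ω‖ ≤ 1 := by
    filter_upwards [hG] with ω hω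
    have h01 : ∀ i j, 0 ≤ X i j ω ∧ X i j ω ≤ 1 := by
      intro i j; rcases hω i j with h | h <;> simp [h]
    have hfac : ∀ i, 0 ≤ (∑ j, X i j ω) / m ∧ (∑ j, X i j ω) / m ≤ 1 := by
      intro i
      constructor
      · apply div_nonneg _ hm0.le
        exact Finset.sum_nonneg fun j _ => (h01 i j).1
      · rw [div_le_one hm0]
        calc ∑ j, X i j ω ≤ ∑ j : Fin m, (1:ℝ) :=
              Finset.sum_le_sum fun j _ => (h01 i j).2
          _ = m := by simp
    rw [hY, Real.norm_eq_abs, abs_of_nonneg (Finset.prod_nonneg fun i _ => (hfac i).1)]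
    exact Finset.prod_le_one (fun i _ => (hfac i).1) (fun i _ => (hfac i).2)
  have hYL2 : MemLp Y 2 P := MemLp.of_bound hYmeas.aestronglyMeasurable 1 hYbd
  have hvar : variance Y P = (∫ ω, Y ω ^ 2 ∂P) - (∫ ω, Y ω ∂P) ^ 2 := by
    rw [variance_eq_sub hYL2]
    congr 1
  -- positivity facts
  have hprodr : (0:ℝ) < ∏ i, r i := Finset.prod_pos fun i _ => hrpos i
  -- key identity : E[Y²] = Q * (E Y)²
  have hkey : (∫ ω, Y ω ^ 2 ∂P) = (∏ i, (1 + (1 - r i) / (m * r i))) * (∏ i, r i)^2 := by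
    rw [hEY2, ← Finset.prod_pow, ← Finset.prod_mul_distrib]
    refine Finset.prod_congr rfl fun i _ => ?_
    have h1 : (m:ℝ) ≠ 0 := hm0.ne'
    have h2 : r i ≠ 0 := (hrpos i).ne'
    field_simp
    ring
  constructor
  · rw [hvar, hEY, hkey]
    have hne : (∏ i, r i)^2 ≠ 0 := pow_ne_zero _ hprodr.ne'
    rw [div_le_iff₀ (pow_pos hprodr 2)]
    have : ((∏ i, (1 + (1 - r i) / (m * r i))) * (∏ i, r i)^2 - (∏ i, r i)^2)
        = ((∏ i, (1 + (1 - r i) / (m * r i))) - 1) * (∏ i, r i)^2 := by ring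
    rw [this]
  · apply sub_le_sub_right
    have hc : ∀ i, 0 ≤ (1 - r i) / (m * r i) := fun i =>
      div_nonneg (by linarith [hr1 i]) (mul_pos hm0 (hrpos i)).le
    calc (∏ i, (1 + (1 - r i) / (m * r i)))
        ≤ ∏ i, Real.exp ((1 - r i) / (m * r i)) := by
          refine Finset.prod_le_prod (fun i _ => by linarith [hc i]) fun i _ => ?_
          rw [add_comm]
          exact Real.add_one_le_exp _
      _ = Real.exp (∑ i, (1 - r i) / (m * r i)) := by rw [Real.exp_sum]
      _ ≤ Real.exp ((k:ℝ) * (M - 1) / m) := by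
          apply Real.exp_le_exp.mpr
          calc ∑ i, (1 - r i) / (m * r i) ≤ ∑ i : Fin k, (M - 1) / m := by
                refine Finset.sum_le_sum fun i _ => ?_
                rw [div_le_div_iff₀ (mul_pos hm0 (hrpos i)) hm0]
                have hMr : 1 ≤ M * r i := by
                  have := (hr i).1
                  rw [div_le_iff₀ hM0] at this
                  linarith [this]
                nlinarith [hrpos i, hm0, hr1 i]
            _ = (k:ℝ) * (M - 1) / m := by
                rw [Finset.sum_const, Finset.card_univ, Fintype.card_fin]
                push_cast; ring
end
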